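/- Every smooth (C^∞) function f : C̃_1(V) × C̃_2(V) × ⋯ × C̃_r(V) → ℝ that is invariant under the diagonal action of GL(V) is constant. -/

import Mathlib

open scoped BigOperators

/-- The space `C̃_m(V)` of symmetric normal tensors of order `m`: `(m+2)`-multilinear
maps `T : V^{m+2} → V` that are symmetric in their first two arguments, symmetric in
their last `m` arguments, and whose total symmetrization vanishes. -/
def SymNormalTensor (V : Type*) [NormedAddCommGroup V] [NormedSpace ℝ V] (m : ℕ) :
    Submodule ℝ (ContinuousMultilinearMap ℝ (fun _ : Fin (m + 2) => V) V) where
  carrier := {T |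
    (∀ v : Fin (m + 2) → V, T (fun i => v (Equiv.swap 0 1 i)) = T v) ∧
    (∀ (v : Fin (m + 2) → V) (σ : Equiv.Perm (Fin (m + 2))),
        (∀ i : Fin (m + 2), (i : ℕ) < 2 → σ i = i) → T (fun i => v (σ i)) = T v) ∧
    (∀ v : Fin (m + 2) → V,
        ∑ σ : Equiv.Perm (Fin (m + 2)), T (fun i => v (σ i)) = 0)}
  add_mem' := by
    rintro a b ⟨ha0, ha1, ha2⟩ ⟨hb0, hb1, hb2⟩
    refine ⟨fun v => ?_, fun v σ hσ => ?_, fun v => ?_⟩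
    · simp [ha0 v, hb0 v]
    · simp [ha1 v σ hσ, hb1 v σ hσ]
    · simp [Finset.sum_add_distrib, ha2 v, hb2 v]
  zero_mem' := by
    refine ⟨fun v => ?_, fun v σ hσ => ?_, fun v => ?_⟩ <;> simp
  smul_mem' := by
    rintro c a ⟨ha0, ha1, ha2⟩
    refine ⟨fun v => ?_, fun v σ hσ => ?_, fun v => ?_⟩
    · simp [ha0 v]
    · simp [ha1 v σ hσ]
    · simp [← Finset.smul_sum, ha2 v]

/-! The homothety `t⁻¹ • id ∈ GL(V)` acts on `C̃_m(V)` as multiplication by `t^(m+2)`, since a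
tensor with `m + 3` arguments is scaled by `t^(m+3)` in its arguments and by `t⁻¹` in its value.
So the orbit of any `T` contains `(t^(m+2) • T_m)_m` for all `t ≠ 0`, and these points tend to `0`
as `t → 0`; a continuous invariant function therefore takes the value `f 0` everywhere. -/

theorem ContinuousMultilinearMap.inv_smul_map_smul_univ {𝕜 E F : Type*}
    [NontriviallyNormedField 𝕜] [NormedAddCommGroup E] [NormedSpace 𝕜 E] [NormedAddCommGroup F]
    [NormedSpace 𝕜 F] {n : ℕ}
    (T : ContinuousMultilinearMap 𝕜 (fun _ : Fin (n + 1) => E) F) {t : 𝕜} (ht : t ≠ 0)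
    (v : Fin (n + 1) → E) :
    t⁻¹ • T (fun i => t • v i) = t ^ n • T v := by
  rw [T.map_smul_univ (fun _ => t) v, Finset.prod_const, Finset.card_univ, Fintype.card_fin,
    smul_smul, pow_succ', ← mul_assoc, inv_mul_cancel₀ ht, one_mul]

namespace SymNormalTensor

variable {V : Type*} [NormedAddCommGroup V] [NormedSpace ℝ V] {r : ℕ}

/-- The action of `t⁻¹ • id ∈ GL(V)` on `C̃_1(V) × ⋯ × C̃_r(V)` (for `t ≠ 0`). -/
def homothety (t : ℝ) (T : ∀ m : Fin r, SymNormalTensor V ((m : ℕ) + 1)) :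
    ∀ m : Fin r, SymNormalTensor V ((m : ℕ) + 1) :=
  fun m => t ^ ((m : ℕ) + 2) • T m

theorem homothety_apply_eq_conj {t : ℝ} (ht : t ≠ 0)
    (T : ∀ m : Fin r, SymNormalTensor V ((m : ℕ) + 1)) (m : Fin r)
    (v : Fin ((m : ℕ) + 1 + 2) → V) :
    (homothety t T m).1 v =
      (LinearEquiv.smulOfNeZero ℝ V t ht).symm
        ((T m).1 fun i => LinearEquiv.smulOfNeZero ℝ V t ht (v i)) :=
  ((T m).1.inv_smul_map_smul_univ ht v).symm

theorem homothety_zero (T : ∀ m : Fin r, SymNormalTensor V ((m : ℕ) + 1)) : homothety 0 T = 0 := by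
  funext m
  simp [homothety]

theorem continuous_homothety (T : ∀ m : Fin r, SymNormalTensor V ((m : ℕ) + 1)) :
    Continuous fun t : ℝ => homothety t T :=
  continuous_pi fun _ => (continuous_pow _).smul continuous_const

end SymNormalTensor

open SymNormalTensor in
theorem smooth_invariant_function_on_sym_normal_tensors_is_constant_general
    {V : Type*} [NormedAddCommGroup V] [NormedSpace ℝ V]
    (r : ℕ)
    (f : (∀ m : Fin r, SymNormalTensor V ((m : ℕ) + 1)) → ℝ)
    (hf : @ContDiff ℝ _ _ _ Pi.normedSpace _ _ _ ⊤ f)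
    (hinv : ∀ (g : V ≃ₗ[ℝ] V) (T T' : ∀ m : Fin r, SymNormalTensor V ((m : ℕ) + 1)),
      (∀ (m : Fin r) (v : Fin ((m : ℕ) + 1 + 2) → V),
          (T' m).1 v = g ((T m).1 fun i => g.symm (v i))) →
      f T' = f T) :
    ∃ c : ℝ, ∀ T, f T = c := by
  have hf_cont : Continuous f := by
    let _ : NormedSpace ℝ (∀ m : Fin r, SymNormalTensor V ((m : ℕ) + 1)) := Pi.normedSpace
    exact hf.continuous
  refine ⟨f 0, fun T => ?_⟩
  have hscale : ∀ t ≠ (0 : ℝ), f (homothety t T) = f T := fun t ht =>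
    hinv _ T _ (homothety_apply_eq_conj ht T)
  have hconst : (fun t => f (homothety t T)) = fun _ => f T :=
    Continuous.ext_on (dense_compl_singleton 0) (hf_cont.comp (continuous_homothety T))
      continuous_const hscale
  simpa [homothety_zero] using (congrFun hconst 0).symm

set_option synthInstance.maxHeartbeats 800000 in
set_option maxHeartbeats 4000000 in
/-- Every smooth function on `C̃_1(V) × ⋯ × C̃_r(V)` invariant under the diagonal
action of `GL(V)` is constant. -/
theorem smooth_invariant_function_on_sym_normal_tensors_is_constant
    {V : Type*} [NormedAddCommGroup V] [NormedSpace ℝ V] [FiniteDimensional ℝ V]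
    (r : ℕ) (hr : 1 ≤ r)
    (f : (∀ m : Fin r, SymNormalTensor V ((m : ℕ) + 1)) → ℝ)
    (hf : @ContDiff ℝ _ _ _ Pi.normedSpace _ _ _ ⊤ f)
    (hinv : ∀ (g : V ≃ₗ[ℝ] V) (T T' : ∀ m : Fin r, SymNormalTensor V ((m : ℕ) + 1)),
      (∀ (m : Fin r) (v : Fin ((m : ℕ) + 1 + 2) → V),
          (T' m).1 v = g ((T m).1 fun i => g.symm (v i))) →
      f T' = f T) :
    ∃ c : ℝ, ∀ T, f T = c :=
  smooth_invariant_function_on_sym_normal_tensors_is_constant_general r f hf hinv
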